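/- (Optimal truncation for distortion-bounded obfuscation) Let W have singular values s_1 ≥ ... ≥ s_m > 0 and z = Σ_{k=1}^n α_k v_k. Define ε_k = sqrt(Σ_{i=k+1}^m α_i² s_i²). If z' is obtained by keeping α'_k = α_k for k < m', setting α'_{m'} = α_{m'} − γ·sign(α_{m'}) with γ = sqrt(ε² − ε_{m'}²)/s_{m'}, and α'_k = 0 for k > m', where m' is the smallest index with ε_{m'} ≤ ε, then the distortion constraint ‖W(z − z')‖ ≤ ε is satisfied (with equality when γ ≥ 0 is chosen as above). -/

import Mathlib

/-!
Orthogonality of `U` and `V` turns the distortion into the weighted coefficient error: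
`‖W (z - z')‖² = Σ_i s_i² (α_i - α'_i)²`. The terms before the boundary index vanish, the boundary
term is `s_{m'}² γ² sign(α_{m'})² ≤ ε² - ε_{m'}²`, and the terms after it add up to `ε_{m'}²`.
Finally `ε_{m'} ≤ ε` because `ε_m = 0 < ε`, so the infimum defining `m'` is attained.
-/

open Matrix

theorem Matrix.sum_sq_mulVec_of_transpose_mul_self {R m n : Type*} [CommRing R]
    [Fintype m] [Fintype n] [DecidableEq n] {U : Matrix m n R} (hU : Uᵀ * U = 1) (y : n → R) :
    ∑ i, (U *ᵥ y) i ^ 2 = ∑ i, y i ^ 2 := by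
  simp only [sq]
  change U *ᵥ y ⬝ᵥ U *ᵥ y = y ⬝ᵥ y
  rw [dotProduct_mulVec, ← mulVec_transpose, mulVec_mulVec, hU, one_mulVec]

theorem Matrix.mulVec_apply_of_eq_rectDiagonal {R : Type*} [Semiring R] {m n : ℕ} (hmn : m ≤ n)
    {S : Matrix (Fin m) (Fin n) R} {s : Fin m → R}
    (hS : ∀ i j, S i j = if (i : ℕ) = (j : ℕ) then s i else 0)
    (d : Fin n → R) (i : Fin m) : (S *ᵥ d) i = s i * d (Fin.castLE hmn i) := by
  rw [mulVec, dotProduct, Finset.sum_eq_single (Fin.castLE hmn i)]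
  · simp [hS]
  · intro j _ hj
    rw [hS, if_neg fun hij => hj (Fin.ext hij.symm), zero_mul]
  · simp

theorem sum_sq_svd_mulVec_sub {m n : ℕ} (hmn : m ≤ n)
    {U : Matrix (Fin m) (Fin m) ℝ} {V : Matrix (Fin n) (Fin n) ℝ} {S : Matrix (Fin m) (Fin n) ℝ}
    {s : Fin m → ℝ} (hU : U * Uᵀ = 1) (hV : V * Vᵀ = 1)
    (hS : ∀ i j, S i j = if (i : ℕ) = (j : ℕ) then s i else 0)
    {z z' α β : Fin n → ℝ} (hα : ∀ k, α k = ∑ i, V i k * z i)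
    (hz' : ∀ i, z' i = ∑ k, β k * V i k) :
    ∑ i, ((U * S * Vᵀ) *ᵥ (z - z')) i ^ 2 =
      ∑ i : Fin m, (s i * (α (Fin.castLE hmn i) - β (Fin.castLE hmn i))) ^ 2 := by
  have hα' : α = Vᵀ *ᵥ z := funext fun k => by simp [hα, mulVec, dotProduct]
  have hz'' : z' = V *ᵥ β := funext fun i => by simp [hz', mulVec, dotProduct, mul_comm]
  have hcoeff : Vᵀ *ᵥ (z - z') = α - β := by
    rw [mulVec_sub, hα', hz'', mulVec_mulVec, mul_eq_one_comm.mp hV, one_mulVec]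
  rw [← mulVec_mulVec, ← mulVec_mulVec, hcoeff,
    sum_sq_mulVec_of_transpose_mul_self (mul_eq_one_comm.mp hU)]
  simp only [Matrix.mulVec_apply_of_eq_rectDiagonal hmn hS, Pi.sub_apply]

theorem Fin.sum_le_add_sum_filter_le {M : Type*} [AddCommMonoid M] [PartialOrder M]
    [IsOrderedAddMonoid M] {m : ℕ} (f : Fin m → M) (k : ℕ) {c : M} (hc : 0 ≤ c)
    (hlt : ∀ i : Fin m, (i : ℕ) + 1 < k → f i = 0) (heq : ∀ i : Fin m, (i : ℕ) + 1 = k → f i ≤ c) :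
    ∑ i, f i ≤ c + ∑ i ∈ Finset.univ.filter (fun i : Fin m => k ≤ (i : ℕ)), f i := by
  rw [← Finset.sum_filter_not_add_sum_filter Finset.univ (fun i : Fin m => k ≤ (i : ℕ))]
  gcongr
  have hhead : ∑ i ∈ Finset.univ.filter (fun i : Fin m => ¬k ≤ (i : ℕ)), f i =
      ∑ i ∈ Finset.univ.filter (fun i : Fin m => (i : ℕ) + 1 = k), f i := by
    refine (Finset.sum_subset (fun i => by simp; omega) fun i hi hi' => hlt i ?_).symm
    simp only [Finset.mem_filter, Finset.mem_univ, true_and, not_le] at hi hi'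
    omega
  have hcard : (Finset.univ.filter (fun i : Fin m => (i : ℕ) + 1 = k)).card ≤ 1 :=
    Finset.card_le_one.mpr fun a ha b hb => Fin.ext (by simp at ha hb; omega)
  calc ∑ i ∈ Finset.univ.filter (fun i : Fin m => ¬k ≤ (i : ℕ)), f i
      ≤ (Finset.univ.filter (fun i : Fin m => (i : ℕ) + 1 = k)).card • c :=
        hhead ▸ Finset.sum_le_card_nsmul _ _ _ fun i hi => heq i (by simpa using hi)
    _ ≤ 1 • c := nsmul_le_nsmul_left hc hcard
    _ = c := one_nsmul c

section Truncation

variable {m n : ℕ} (α : Fin n → ℝ) (s : Fin m → ℝ) (m' : ℕ) (δ : ℝ)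

/-- The coefficients `α'` of `z'`, with `δ = √(ε² - ε_{m'}²)`. Indices of `Fin` start at `0`,
so the paper's index of `α k` is `k + 1`. -/
noncomputable def truncatedCoeffs (k : Fin n) : ℝ :=
  if hk : (k : ℕ) < m then
    (if (k : ℕ) + 1 < m' then α k
     else if (k : ℕ) + 1 = m' then α k - δ / s ⟨(k : ℕ), hk⟩ * Real.sign (α k)
     else 0)
  else 0

variable (hmn : m ≤ n)

theorem truncatedCoeffs_castLE_of_lt {i : Fin m} (hi : (i : ℕ) + 1 < m') :
    truncatedCoeffs α s m' δ (Fin.castLE hmn i) = α (Fin.castLE hmn i) := by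
  simp [truncatedCoeffs, hi]

theorem truncatedCoeffs_castLE_of_le {i : Fin m} (hi : m' ≤ i) :
    truncatedCoeffs α s m' δ (Fin.castLE hmn i) = 0 := by
  simp [truncatedCoeffs, show ¬(i : ℕ) + 1 < m' by omega, show (i : ℕ) + 1 ≠ m' by omega]

theorem sub_truncatedCoeffs_castLE_of_eq {i : Fin m} (hi : (i : ℕ) + 1 = m') :
    α (Fin.castLE hmn i) - truncatedCoeffs α s m' δ (Fin.castLE hmn i) =
      δ / s i * Real.sign (α (Fin.castLE hmn i)) := by
  simp [truncatedCoeffs, hi]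

theorem sum_sq_mul_sub_truncatedCoeffs_le (hs : ∀ i, s i ≠ 0) :
    ∑ i : Fin m, (s i * (α (Fin.castLE hmn i) - truncatedCoeffs α s m' δ (Fin.castLE hmn i))) ^ 2
      ≤ δ ^ 2 + ∑ i ∈ Finset.univ.filter (fun i : Fin m => m' ≤ (i : ℕ)),
        α (Fin.castLE hmn i) ^ 2 * s i ^ 2 := by
  refine (Fin.sum_le_add_sum_filter_le _ m' (sq_nonneg δ) (fun i hi => ?_) fun i hi => ?_).trans_eq
    ?_
  · simp [truncatedCoeffs_castLE_of_lt α s m' δ hmn hi]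
  · rw [sub_truncatedCoeffs_castLE_of_eq α s m' δ hmn hi, ← mul_assoc, mul_div_cancel₀ δ (hs i),
      mul_pow]
    have : Real.sign (α (Fin.castLE hmn i)) ^ 2 ≤ 1 := by
      rcases Real.sign_apply_eq (α (Fin.castLE hmn i)) with h | h | h <;> simp [h]
    nlinarith [sq_nonneg δ]
  · refine congrArg _ (Finset.sum_congr rfl fun i hi => ?_)
    rw [truncatedCoeffs_castLE_of_le α s m' δ hmn (by simpa using hi)]
    ring

end Truncation

theorem truncation_satisfies_distortion_general
    (m n : ℕ) (hmn : m ≤ n)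
    (U : Matrix (Fin m) (Fin m) ℝ) (V : Matrix (Fin n) (Fin n) ℝ)
    (S : Matrix (Fin m) (Fin n) ℝ) (s : Fin m → ℝ)
    (hU : U * U.transpose = 1) (hV : V * V.transpose = 1)
    (hS : ∀ i j, S i j = if (i : ℕ) = (j : ℕ) then s i else 0)
    (hpos : ∀ i, 0 < s i)
    (W : Matrix (Fin m) (Fin n) ℝ) (hW : W = U * S * V.transpose)
    (z : Fin n → ℝ) (α : Fin n → ℝ)
    (hα : ∀ k, α k = ∑ i, V i k * z i)
    (ε : ℝ) (hε : 0 < ε)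
    (εf : ℕ → ℝ)
    (hεf : ∀ k, εf k = Real.sqrt (∑ i ∈ Finset.univ.filter (fun i : Fin m => k ≤ (i : ℕ)),
      α (Fin.castLE hmn i) ^ 2 * s i ^ 2))
    (m' : ℕ) (hm' : m' = sInf {k : ℕ | εf k ≤ ε})
    (β : Fin n → ℝ)
    (hβ : ∀ k : Fin n, β k =
      if hk : (k : ℕ) < m then
        (if (k : ℕ) + 1 < m' then α k
         else if (k : ℕ) + 1 = m' then
           α k - Real.sqrt (ε ^ 2 - εf m' ^ 2) / s ⟨(k : ℕ), hk⟩ * Real.sign (α k)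
         else 0)
      else 0)
    (z' : Fin n → ℝ) (hz' : ∀ i, z' i = ∑ k : Fin n, β k * V i k) :
    Real.sqrt (∑ i, (W.mulVec (fun j => z j - z' j) i) ^ 2) ≤ ε := by
  have hβ' : β = truncatedCoeffs α s m' (Real.sqrt (ε ^ 2 - εf m' ^ 2)) := funext hβ
  have hm'ε : εf m' ≤ ε := hm' ▸ Nat.sInf_mem (s := {k | εf k ≤ ε}) ⟨m, show εf m ≤ ε by
    simpa [hεf, Finset.filter_false_of_mem, Fin.is_lt] using hε.le⟩
  have htail : εf m' ^ 2 = ∑ i ∈ Finset.univ.filter (fun i : Fin m => m' ≤ (i : ℕ)),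
      α (Fin.castLE hmn i) ^ 2 * s i ^ 2 :=
    hεf m' ▸ Real.sq_sqrt (Finset.sum_nonneg fun i _ => by positivity)
  have hgap : εf m' ^ 2 ≤ ε ^ 2 :=
    pow_le_pow_left₀ (hεf m' ▸ Real.sqrt_nonneg _) hm'ε 2
  rw [Real.sqrt_le_left hε.le, hW]
  calc ∑ i, ((U * S * Vᵀ) *ᵥ (z - z')) i ^ 2
      = ∑ i : Fin m, (s i * (α (Fin.castLE hmn i) - β (Fin.castLE hmn i))) ^ 2 :=
        sum_sq_svd_mulVec_sub hmn hU hV hS hα hz'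
    _ ≤ Real.sqrt (ε ^ 2 - εf m' ^ 2) ^ 2 + εf m' ^ 2 :=
        hβ' ▸ htail ▸ sum_sq_mul_sub_truncatedCoeffs_le _ _ _ _ hmn fun i => (hpos i).ne'
    _ = ε ^ 2 := by
        rw [Real.sq_sqrt (sub_nonneg.mpr hgap), sub_add_cancel]

/-- Optimal truncation for distortion-bounded obfuscation: with singular values
`s_1 ≥ … ≥ s_m > 0`, `z = Σ_k α_k v_k`, `ε_k = sqrt (Σ_{i>k} α_i² s_i²)`,
`m' = min {k : ε_k ≤ ε}`, the modified vector `z'` keeping `α_k` for `k < m'`, setting the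
boundary coefficient to `α − sign(α)·sqrt(ε² − ε_{m'}²)/s` and zeroing the rest satisfies
the distortion constraint `‖W(z − z')‖ ≤ ε`. -/
theorem truncation_satisfies_distortion
    (m n : ℕ) (hmn : m ≤ n)
    (U : Matrix (Fin m) (Fin m) ℝ) (V : Matrix (Fin n) (Fin n) ℝ)
    (S : Matrix (Fin m) (Fin n) ℝ) (s : Fin m → ℝ)
    (hU : U * U.transpose = 1) (hV : V * V.transpose = 1)
    (hS : ∀ i j, S i j = if (i : ℕ) = (j : ℕ) then s i else 0)
    (hpos : ∀ i, 0 < s i) (hsort : ∀ i j : Fin m, i ≤ j → s j ≤ s i)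
    (W : Matrix (Fin m) (Fin n) ℝ) (hW : W = U * S * V.transpose)
    (z : Fin n → ℝ) (α : Fin n → ℝ)
    (hα : ∀ k, α k = ∑ i, V i k * z i)
    (ε : ℝ) (hε : 0 < ε)
    (εf : ℕ → ℝ)
    (hεf : ∀ k, εf k = Real.sqrt (∑ i ∈ Finset.univ.filter (fun i : Fin m => k ≤ (i : ℕ)),
      α (Fin.castLE hmn i) ^ 2 * s i ^ 2))
    (m' : ℕ) (hm' : m' = sInf {k : ℕ | εf k ≤ ε})
    (β : Fin n → ℝ)
    (hβ : ∀ k : Fin n, β k =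
      if hk : (k : ℕ) < m then
        (if (k : ℕ) + 1 < m' then α k
         else if (k : ℕ) + 1 = m' then
           α k - Real.sqrt (ε ^ 2 - εf m' ^ 2) / s ⟨(k : ℕ), hk⟩ * Real.sign (α k)
         else 0)
      else 0)
    (z' : Fin n → ℝ) (hz' : ∀ i, z' i = ∑ k : Fin n, β k * V i k) :
    Real.sqrt (∑ i, (W.mulVec (fun j => z j - z' j) i) ^ 2) ≤ ε :=
  truncation_satisfies_distortion_general m n hmn U V S s hU hV hS hpos W hW z α hα ε hε εf hεf m'
    hm' β hβ z' hz'
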